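/- arXiv:2604.12797 — 3 statements merged into one kernel-verified Lean document; each statement's English description precedes it below -/
import Mathlib

section
/- Regularity consequence of the weak formulation: If (v, A) is a weak solution of the free boundary problem (under the structural assumptions and initial condition assumption), then the functions t ↦ I_t, t ↦ C_t and t ↦ A_t are continuously differentiable on (0,∞), and for all t > 0 they satisfy I'_t = v(t, A_t) γ(t, C_t) σ(t, A_t)² and A'_t = α ∫_{t−d̄}^t ϱ(t−s) I'_s ds. -/
open MeasureTheory Set Filter Topology

/-- The infected proportion `I_t = 1 - ∫_{A_t}^∞ v(t,x) dx`, with the convention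
`I_s = 0` for `s ≤ 0`. -/
noncomputable def Ifun (v : ℝ → ℝ → ℝ) (A : ℝ → ℝ) (t : ℝ) : ℝ :=
  if t ≤ 0 then 0 else 1 - ∫ x in Ici (A t), v t x

/-- The current contagiousness `C_t = ∫_{t-d̄}^t ϱ(t-s)(I_s - I_{s-d̄}) ds`. -/
noncomputable def Cfun (ϱ : ℝ → ℝ) (dbar : ℝ) (v : ℝ → ℝ → ℝ) (A : ℝ → ℝ) (t : ℝ) : ℝ :=
  ∫ s in (t - dbar)..t, ϱ (t - s) * (Ifun v A s - Ifun v A (s - dbar))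

/-- Structural conditions (Assumption 2.1) on the coefficients `b, σ, γ, ϱ`. -/
def StructuralAssumptions (b σ γ : ℝ → ℝ → ℝ) (ϱ : ℝ → ℝ) (dbar : ℝ) : Prop :=
  Measurable (Function.uncurry b) ∧ Measurable (Function.uncurry σ) ∧
  Measurable (Function.uncurry γ) ∧
  -- b : Lipschitz in x uniformly in t ∈ [0,T], with at most linear growth
  (∀ T > (0 : ℝ), ∃ K > (0 : ℝ),
    (∀ t ∈ Icc (0 : ℝ) T, LipschitzWith (Real.toNNReal K) (b t)) ∧
    (∀ t ∈ Icc (0 : ℝ) T, ∀ x : ℝ, |b t x| ≤ K * (1 + |x|))) ∧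
  -- σ : non-degenerate, bounded, jointly Lipschitz
  (∀ T > (0 : ℝ), ∃ κ K : ℝ, 0 < κ ∧ κ ≤ K ∧
    LipschitzOnWith (Real.toNNReal K) (Function.uncurry σ)
      (Icc (0 : ℝ) T ×ˢ (univ : Set ℝ)) ∧
    (∀ t ∈ Icc (0 : ℝ) T, ∀ x : ℝ, κ ≤ σ t x ∧ σ t x ≤ K)) ∧
  -- γ : C¹ jointly, Lipschitz in x uniformly in t, bounded away from zero
  (∀ T > (0 : ℝ), ∃ K κγ : ℝ, 0 < κγ ∧
    ContDiffOn ℝ 1 (Function.uncurry γ) (Icc (0 : ℝ) T ×ˢ (univ : Set ℝ)) ∧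
    (∀ t ∈ Icc (0 : ℝ) T, LipschitzWith (Real.toNNReal K) (γ t)) ∧
    (∀ t ∈ Icc (0 : ℝ) T, ∀ x : ℝ, κγ ≤ γ t x)) ∧
  -- ϱ : right-continuous, of bounded variation, non-negative, unit integral
  (∀ s ∈ Icc (0 : ℝ) dbar, ContinuousWithinAt ϱ (Ici s) s) ∧
  BoundedVariationOn ϱ (Icc 0 dbar) ∧
  (∀ s ∈ Icc (0 : ℝ) dbar, 0 ≤ ϱ s) ∧
  (∫ s in (0 : ℝ)..dbar, ϱ s) = 1

/-- Assumptions on the initial condition (Assumption 2.2): `P₀` is a probability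
measure on `[a₀, ∞)` with a Gaussian moment. -/
def InitialCondition (a₀ : ℝ) (P₀ : Measure ℝ) : Prop :=
  IsProbabilityMeasure P₀ ∧ P₀ (Iio a₀) = 0 ∧
  ∃ c > (0 : ℝ), Integrable (fun x => Real.exp (c * x ^ 2)) P₀

/-- Weak solution `(v, A)` of the free boundary problem (Definition 2.3). -/
def IsWeakSolution (b σ γ : ℝ → ℝ → ℝ) (ϱ : ℝ → ℝ) (dbar α a₀ : ℝ)
    (P₀ : Measure ℝ) (v : ℝ → ℝ → ℝ) (A : ℝ → ℝ) : Prop :=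
  -- (i) A is continuous with A₀ = a₀
  Continuous A ∧ A 0 = a₀ ∧
  -- (ii) v ≥ 0, jointly continuous in t > 0 and x ≥ A_t
  (∀ t x : ℝ, 0 ≤ v t x) ∧
  ContinuousOn (fun p : ℝ × ℝ => v p.1 p.2) {p : ℝ × ℝ | 0 < p.1 ∧ A p.1 ≤ p.2} ∧
  -- (iii) integrability
  (∀ t > (0 : ℝ), IntegrableOn (v t) (Ici (A t))) ∧
  (∀ t > (0 : ℝ), IntegrableOn (fun s => v s (A s)) (Icc 0 t)) ∧
  -- (iv) v(t,x) dx → P₀ weakly as t ↓ 0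
  (∀ φ : ℝ → ℝ, Continuous φ → (∃ M, ∀ x, |φ x| ≤ M) →
    Tendsto (fun t => ∫ x in Ici (A t), φ x * v t x) (𝓝[>] (0 : ℝ))
      (𝓝 (∫ x, φ x ∂P₀))) ∧
  -- the defining relation for the moving boundary A
  (∀ t > (0 : ℝ), A t = a₀ + α * ∫ s in (t - dbar)..t, ϱ (t - s) * Ifun v A s) ∧
  -- (v) the weak formulation for all t ≥ 0 and all φ ∈ C²_b(ℝ)
  (∀ t ≥ (0 : ℝ), ∀ φ : ℝ → ℝ, ContDiff ℝ 2 φ →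
    (∃ M, ∀ x : ℝ, |φ x| ≤ M ∧ |deriv φ x| ≤ M ∧ |deriv (deriv φ) x| ≤ M) →
    (∫ x in Ici (A t), φ x * v t x) - (∫ x, φ x ∂P₀) =
      (∫ s in (0 : ℝ)..t, ∫ x in Ici (A s),
          deriv (deriv φ) x * (1 / 2 * (σ s x) ^ 2 * v s x))
      + (∫ s in (0 : ℝ)..t, ∫ x in Ici (A s), deriv φ x * (b s x * v s x))
      + (∫ s in (0 : ℝ)..t,
          (1 / 2 * deriv φ (A s) - γ s (Cfun ϱ dbar v A s) * φ (A s))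
            * (σ s (A s)) ^ 2 * v s (A s)))

/-!
Testing the weak formulation with `φ ≡ 1` shows that `I` is the primitive of
`I'_s = v(s, A_s) γ(s, C_s) σ(s, A_s)²`. Both `A` and `C` are built from the delayed average
`Ψ(t) = ∫_0^d̄ ϱ(r) I_{t-r} dr`: `A = a₀ + α Ψ` and `C_t = Ψ(t) - Ψ(t - d̄)`.
Convolving the bounded-variation kernel `ϱ` with a locally integrable function gives a continuous
function, because `ϱ` is bounded and has only countably many discontinuities. Applied to the
bounded function `I`, this makes `C` continuous, hence `I'` locally integrable and continuous on
`(0, ∞)`. Applied to `I'`, and combined with Fubini, it shows that `Ψ` is a primitive of the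
continuous function `t ↦ ∫_0^d̄ ϱ(r) I'_{t-r} dr`, which yields the derivatives of `A` and `C`.
-/

open scoped Pointwise

theorem continuous_integral_comp_sub_mul {k E : ℝ → ℝ} {M : ℝ} (hkM : ∀ x, |k x| ≤ M)
    (hks : HasCompactSupport k) (hkc : {x | ¬ContinuousAt k x}.Countable)
    (hE : LocallyIntegrable E) :
    Continuous fun t => ∫ u, k (t - u) * E u := by
  -- Dominated convergence: for a.e. `u`, `k` is continuous at `t₀ - u`.
  have hkm : Measurable k := measurable_of_countable_not_continuousAt hkc
  obtain ⟨R, hR⟩ := hks.isCompact.isBounded.subset_closedBall 0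
  refine continuous_iff_continuousAt.2 fun t₀ => ?_
  refine tendsto_integral_filter_of_dominated_convergence
    ((Metric.closedBall t₀ (R + 1)).indicator fun u => M * |E u|) ?_ ?_ ?_ ?_
  · exact Eventually.of_forall fun t =>
      ((hkm.comp (measurable_const.sub measurable_id)).aestronglyMeasurable).mul
        hE.aestronglyMeasurable
  · filter_upwards [Metric.closedBall_mem_nhds t₀ one_pos] with t ht
    refine Eventually.of_forall fun u => ?_
    by_cases hk : k (t - u) = 0
    · rw [hk, zero_mul, norm_zero]
      exact indicator_nonneg (fun u _ => mul_nonneg ((abs_nonneg _).trans (hkM 0))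
        (abs_nonneg _)) u
    · have htu : dist (t - u) 0 ≤ R := hR (subset_tsupport k hk)
      have hu : u ∈ Metric.closedBall t₀ (R + 1) := by
        rw [Metric.mem_closedBall, Real.dist_eq] at ht ⊢
        rw [Real.dist_eq, sub_zero] at htu
        calc |u - t₀| ≤ |t - u| + |t - t₀| := by
              rw [abs_sub_comm t u]; exact abs_sub_le u t t₀
          _ ≤ R + 1 := add_le_add htu ht
      rw [indicator_of_mem hu, Real.norm_eq_abs, abs_mul]
      exact mul_le_mul_of_nonneg_right (hkM _) (abs_nonneg _)
  · exact IntegrableOn.integrable_indicator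
      ((hE.integrableOn_isCompact (isCompact_closedBall t₀ (R + 1))).norm.const_mul M)
      measurableSet_closedBall
  · have hinj : Function.Injective fun u : ℝ => t₀ - u := sub_right_injective
    filter_upwards [(hkc.preimage hinj).ae_notMem volume] with u hu
    exact (((not_not.1 hu).comp (f := fun t => t - u) (continuous_sub_right u).continuousAt).mul
      continuousAt_const).tendsto

theorem BoundedVariationOn.abs_indicator_Ioc_le {f : ℝ → ℝ} {a b : ℝ}
    (hf : BoundedVariationOn f (Icc a b)) (x : ℝ) :
    |(Ioc a b).indicator f x| ≤ |f b| + (eVariationOn f (Icc a b)).toReal := by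
  by_cases hx : x ∈ Ioc a b
  · rw [indicator_of_mem hx]
    have := hf.dist_le (Ioc_subset_Icc_self hx) (right_mem_Icc.2 (hx.1.le.trans hx.2))
    rw [Real.dist_eq] at this
    linarith [abs_sub_abs_le_abs_sub (f x) (f b)]
  · rw [indicator_of_notMem hx, abs_zero]
    positivity

theorem BoundedVariationOn.countable_not_continuousAt_indicator_Ioc {f : ℝ → ℝ} {a b : ℝ}
    (hf : BoundedVariationOn f (Icc a b)) :
    {x | ¬ContinuousAt ((Ioc a b).indicator f) x}.Countable := by
  obtain ⟨p, q, hp, hq, rfl⟩ := hf.locallyBoundedVariationOn.exists_monotoneOn_sub_monotoneOn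
  refine (((countable_singleton b).insert a).union
    (hp.countable_not_continuousWithinAt.union hq.countable_not_continuousWithinAt)).mono ?_
  intro x hx
  by_contra hgood
  simp only [mem_union, mem_insert_iff, mem_singleton_iff, mem_ofPred_eq, not_or, not_and,
    not_not] at hgood
  obtain ⟨⟨hxa, hxb⟩, hpx, hqx⟩ := hgood
  apply hx
  by_cases hxI : x ∈ Icc a b
  · have hxI' : x ∈ Ioo a b := ⟨lt_of_le_of_ne hxI.1 (Ne.symm hxa), lt_of_le_of_ne hxI.2 hxb⟩
    have hIcc : Icc a b ∈ 𝓝 x := Icc_mem_nhds hxI'.1 hxI'.2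
    refine ((hpx hxI).continuousAt hIcc |>.sub ((hqx hxI).continuousAt hIcc)).congr ?_
    filter_upwards [Ioo_mem_nhds hxI'.1 hxI'.2] with y hy
    exact (indicator_of_mem (Ioo_subset_Ioc_self hy) _).symm
  · refine (continuousAt_const (y := (0 : ℝ))).congr ?_
    filter_upwards [isClosed_Icc.isOpen_compl.mem_nhds hxI] with y hy
    exact (indicator_of_notMem (fun h => hy (Ioc_subset_Icc_self h)) _).symm

theorem BoundedVariationOn.intervalIntegrable {f : ℝ → ℝ} {a b : ℝ} (hab : a ≤ b)
    (hf : BoundedVariationOn f (Icc a b)) : IntervalIntegrable f volume a b := by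
  obtain ⟨p, q, hp, hq, rfl⟩ := hf.locallyBoundedVariationOn.exists_monotoneOn_sub_monotoneOn
  rw [← uIcc_of_le hab] at hp hq
  exact hp.intervalIntegrable.sub hq.intervalIntegrable

theorem integrableOn_mul_comp_sub {ϱ E : ℝ → ℝ} {a b c d : ℝ}
    (hϱ : IntervalIntegrable ϱ volume a b) (hE : LocallyIntegrable E) :
    IntegrableOn (fun p : ℝ × ℝ => ϱ p.1 * E (p.2 - p.1)) (uIoc a b ×ˢ uIoc c d) := by
  have hK : IsCompact (uIcc c d - uIcc a b) := by
    rw [← Set.sub_image_prod]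
    exact (isCompact_uIcc.prod isCompact_uIcc).image continuous_sub
  have hf : Integrable ((uIoc a b).indicator ϱ) :=
    (intervalIntegrable_iff.1 hϱ).integrable_indicator measurableSet_uIoc
  have hg : Integrable ((uIcc c d - uIcc a b).indicator E) :=
    (hE.integrableOn_isCompact hK).integrable_indicator hK.measurableSet
  have hprod := (hf.convolution_integrand (ContinuousLinearMap.mul ℝ ℝ) hg).swap
  rw [← Measure.volume_eq_prod] at hprod
  refine hprod.integrableOn.congr_fun (fun p hp => ?_) (measurableSet_uIoc.prod measurableSet_uIoc)
  have hK' : p.2 - p.1 ∈ uIcc c d - uIcc a b :=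
    sub_mem_sub (uIoc_subset_uIcc hp.2) (uIoc_subset_uIcc hp.1)
  simp [indicator_of_mem hp.1, indicator_of_mem hK']

theorem BoundedVariationOn.continuous_integral_mul_comp_sub {ϱ E : ℝ → ℝ} {a b : ℝ}
    (hab : a ≤ b) (hϱ : BoundedVariationOn ϱ (Icc a b)) (hE : LocallyIntegrable E) :
    Continuous fun t => ∫ r in a..b, ϱ r * E (t - r) := by
  have hconv : (fun t => ∫ r in a..b, ϱ r * E (t - r)) =
      fun t => ∫ u, (Ioc a b).indicator ϱ (t - u) * E u := by
    funext t
    rw [intervalIntegral.integral_of_le hab, ← integral_indicator measurableSet_Ioc,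
      ← integral_sub_left_eq_self _ volume t]
    congr 1 with u
    by_cases h : t - u ∈ Ioc a b <;> simp [h]
  rw [hconv]
  exact continuous_integral_comp_sub_mul hϱ.abs_indicator_Ioc_le
    (HasCompactSupport.intro isCompact_Icc fun x hx =>
      indicator_of_notMem (fun h => hx (Ioc_subset_Icc_self h)) _)
    hϱ.countable_not_continuousAt_indicator_Ioc hE

theorem hasDerivAt_integral_mul_primitive_comp_sub {ϱ E : ℝ → ℝ} {a b : ℝ}
    (hϱ : IntervalIntegrable ϱ volume a b) (hE : LocallyIntegrable E)
    (hg : Continuous fun t => ∫ r in a..b, ϱ r * E (t - r)) (t : ℝ) :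
    HasDerivAt (fun t => ∫ r in a..b, ϱ r * ∫ x in (0 : ℝ)..(t - r), E x)
      (∫ r in a..b, ϱ r * E (t - r)) t := by
  have hEint : ∀ p q, IntervalIntegrable E volume p q := fun p q =>
    (hE.integrableOn_isCompact isCompact_uIcc).intervalIntegrable
  have hF : Continuous fun y => ∫ x in (0 : ℝ)..y, E x :=
    intervalIntegral.continuous_primitive hEint 0
  have hGint : ∀ u, IntervalIntegrable (fun r => ϱ r * ∫ x in (0 : ℝ)..(u - r), E x) volume a b :=
    fun u => hϱ.mul_continuousOn (hF.comp (continuous_sub_left u)).continuousOn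
  -- By Fubini, the function differs by a constant from a primitive of the continuous integrand.
  have hG : ∀ u, (∫ r in a..b, ϱ r * ∫ x in (0 : ℝ)..(u - r), E x) =
      (∫ r in a..b, ϱ r * ∫ x in (0 : ℝ)..(0 - r), E x) +
        ∫ s in (0 : ℝ)..u, ∫ r in a..b, ϱ r * E (s - r) := by
    intro u
    rw [← intervalIntegral_intervalIntegral_swap (F := fun r s => ϱ r * E (s - r))
        (integrableOn_mul_comp_sub hϱ hE),
      ← sub_eq_iff_eq_add', ← intervalIntegral.integral_sub (hGint u) (hGint 0)]
    refine intervalIntegral.integral_congr fun r _ => ?_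
    rw [← mul_sub, intervalIntegral.integral_interval_sub_left (hEint _ _) (hEint _ _),
      ← intervalIntegral.integral_comp_sub_right, intervalIntegral.integral_const_mul]
  rw [funext hG]
  exact ((hg.integral_hasStrictDerivAt 0 t).hasDerivAt).const_add _

theorem integral_comp_sub_left_mul (ϱ f : ℝ → ℝ) (t d : ℝ) :
    ∫ s in (t - d)..t, ϱ (t - s) * f s = ∫ r in (0 : ℝ)..d, ϱ r * f (t - r) := by
  simpa only [sub_sub_cancel, sub_self] using
    intervalIntegral.integral_comp_sub_left (fun r => ϱ r * f (t - r)) t (a := t - d) (b := t)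

/-- `I'` in the paper. -/
noncomputable def Irate (σ γ : ℝ → ℝ → ℝ) (ϱ : ℝ → ℝ) (dbar : ℝ) (v : ℝ → ℝ → ℝ) (A : ℝ → ℝ)
    (s : ℝ) : ℝ :=
  if s ≤ 0 then 0 else v s (A s) * γ s (Cfun ϱ dbar v A s) * σ s (A s) ^ 2

section WeakSolution

variable {b σ γ : ℝ → ℝ → ℝ} {ϱ : ℝ → ℝ} {dbar α a₀ : ℝ} {P₀ : Measure ℝ}
  {v : ℝ → ℝ → ℝ} {A : ℝ → ℝ}

theorem measurable_Ifun (hA : Continuous A)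
    (hv : ContinuousOn (fun p : ℝ × ℝ => v p.1 p.2) {p | 0 < p.1 ∧ A p.1 ≤ p.2}) :
    Measurable (Ifun v A) := by
  classical
  set S := {p : ℝ × ℝ | 0 < p.1 ∧ A p.1 ≤ p.2}
  have hS : MeasurableSet S := (measurableSet_lt measurable_const measurable_fst).inter
    (measurableSet_le (hA.measurable.comp measurable_fst) measurable_snd)
  have hw : Measurable (S.indicator fun p => v p.1 p.2) := by
    rw [← piecewise_eq_indicator]
    exact hv.measurable_piecewise continuousOn_const hS
  have hI : Ifun v A = fun t => if t ≤ 0 then 0 else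
      1 - ∫ x, S.indicator (fun p => v p.1 p.2) (t, x) := by
    funext t
    unfold Ifun
    split_ifs with ht
    · rfl
    · rw [← integral_indicator measurableSet_Ici]
      congr 2 with x
      by_cases hx : A t ≤ x <;> simp [S, indicator, hx, not_le.1 ht]
  rw [hI]
  exact Measurable.ite measurableSet_Iic measurable_const
    (measurable_const.sub hw.stronglyMeasurable.integral_prod_right'.measurable)

theorem Ifun_le_one (hv : ∀ t x, 0 ≤ v t x) (t : ℝ) : Ifun v A t ≤ 1 := by
  unfold Ifun
  split_ifs
  · exact zero_le_one
  · have : 0 ≤ ∫ x in Ici (A t), v t x := setIntegral_nonneg measurableSet_Ici fun x _ => hv t x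
    linarith

theorem StructuralAssumptions.gamma_nonneg (h : StructuralAssumptions b σ γ ϱ dbar) {t : ℝ}
    (ht : 0 ≤ t) (x : ℝ) : 0 ≤ γ t x := by
  obtain ⟨_, κ, hκ, -, -, hγκ⟩ := h.2.2.2.2.2.1 (t + 1) (by linarith)
  exact hκ.le.trans (hγκ t ⟨ht, by linarith⟩ x)

theorem StructuralAssumptions.continuousOn_coeff (h : StructuralAssumptions b σ γ ϱ dbar)
    {X Y : ℝ → ℝ} (hX : Continuous X) (hY : Continuous Y) {T : ℝ} (hT : 0 < T) :
    ContinuousOn (fun s => γ s (X s) * σ s (Y s) ^ 2) (Icc 0 T) := by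
  obtain ⟨_, _, _, _, hσ, -⟩ := h.2.2.2.2.1 T hT
  obtain ⟨_, _, _, hγ, -, -⟩ := h.2.2.2.2.2.1 T hT
  have hmaps (Z : ℝ → ℝ) : MapsTo (fun s => (s, Z s)) (Icc 0 T) (Icc 0 T ×ˢ univ) :=
    fun s hs => ⟨hs, mem_univ _⟩
  exact (hγ.continuousOn.comp (continuousOn_id.prodMk hX.continuousOn) (hmaps X)).mul
    ((hσ.continuousOn.comp (continuousOn_id.prodMk hY.continuousOn) (hmaps Y)).pow 2)

/-- The weak formulation tested against `φ ≡ 1`. -/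
theorem IsWeakSolution.Ifun_eq_integral [IsProbabilityMeasure P₀]
    (hsol : IsWeakSolution b σ γ ϱ dbar α a₀ P₀ v A) {t : ℝ} (ht : 0 < t) :
    Ifun v A t = ∫ s in (0 : ℝ)..t, γ s (Cfun ϱ dbar v A s) * σ s (A s) ^ 2 * v s (A s) := by
  obtain ⟨-, -, -, -, -, -, -, -, hweak⟩ := hsol
  have h := hweak t ht.le (fun _ => 1) contDiff_const ⟨1, fun x => by simp⟩
  simp only [deriv_const', zero_mul, one_mul, mul_zero, mul_one, integral_zero,
    intervalIntegral.integral_zero, zero_add, integral_const, probReal_univ, smul_eq_mul,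
    zero_sub, neg_mul, intervalIntegral.integral_neg] at h
  rw [Ifun, if_neg ht.not_ge]
  linarith

theorem IsWeakSolution.abs_Ifun_le_one [IsProbabilityMeasure P₀]
    (hsol : IsWeakSolution b σ γ ϱ dbar α a₀ P₀ v A)
    (hstruct : StructuralAssumptions b σ γ ϱ dbar) (t : ℝ) : |Ifun v A t| ≤ 1 := by
  refine abs_le.2 ⟨?_, Ifun_le_one hsol.2.2.1 t⟩
  rcases le_or_gt t 0 with ht | ht
  · rw [Ifun, if_pos ht]
    exact neg_one_lt_zero.le
  · rw [hsol.Ifun_eq_integral ht]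
    refine neg_one_lt_zero.le.trans (intervalIntegral.integral_nonneg ht.le fun s hs => ?_)
    exact mul_nonneg (mul_nonneg (hstruct.gamma_nonneg hs.1 _) (sq_nonneg _)) (hsol.2.2.1 _ _)

theorem IsWeakSolution.locallyIntegrable_Ifun [IsProbabilityMeasure P₀]
    (hsol : IsWeakSolution b σ γ ϱ dbar α a₀ P₀ v A)
    (hstruct : StructuralAssumptions b σ γ ϱ dbar) : LocallyIntegrable (Ifun v A) :=
  (locallyIntegrable_const (1 : ℝ)).mono (measurable_Ifun hsol.1 hsol.2.2.2.1).aestronglyMeasurable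
    (ae_of_all _ fun t => by simpa using hsol.abs_Ifun_le_one hstruct t)

theorem IsWeakSolution.Cfun_eq_sub [IsProbabilityMeasure P₀]
    (hsol : IsWeakSolution b σ γ ϱ dbar α a₀ P₀ v A)
    (hstruct : StructuralAssumptions b σ γ ϱ dbar) (hϱ : IntervalIntegrable ϱ volume 0 dbar)
    (t : ℝ) :
    Cfun ϱ dbar v A t = (∫ r in (0 : ℝ)..dbar, ϱ r * Ifun v A (t - r)) -
      ∫ r in (0 : ℝ)..dbar, ϱ r * Ifun v A (t - dbar - r) := by
  have hint (u : ℝ) : IntervalIntegrable (fun r => ϱ r * Ifun v A (u - r)) volume 0 dbar :=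
    intervalIntegrable_iff.2 ((intervalIntegrable_iff.1 hϱ).mul_bdd
      ((measurable_Ifun hsol.1 hsol.2.2.2.1).comp
        (measurable_const.sub measurable_id)).aestronglyMeasurable
      (ae_of_all _ fun r => hsol.abs_Ifun_le_one hstruct _))
  rw [Cfun, integral_comp_sub_left_mul, ← intervalIntegral.integral_sub (hint t) (hint _)]
  refine intervalIntegral.integral_congr fun r _ => ?_
  simp only [mul_sub, sub_right_comm]

theorem IsWeakSolution.Ifun_eq_integral_Irate [IsProbabilityMeasure P₀]
    (hsol : IsWeakSolution b σ γ ϱ dbar α a₀ P₀ v A) (t : ℝ) :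
    Ifun v A t = ∫ s in (0 : ℝ)..t, Irate σ γ ϱ dbar v A s := by
  rcases le_or_gt t 0 with ht | ht
  · have hzero : EqOn (Irate σ γ ϱ dbar v A) 0 (uIcc 0 t) := fun s hs =>
      if_pos ((uIcc_of_ge ht ▸ hs).2)
    rw [Ifun, if_pos ht, intervalIntegral.integral_congr hzero, Pi.zero_def,
      intervalIntegral.integral_zero]
  · rw [hsol.Ifun_eq_integral ht]
    refine intervalIntegral.integral_congr_ae (ae_of_all _ fun s hs => ?_)
    rw [uIoc_of_le ht.le] at hs
    rw [Irate, if_neg (not_le.2 hs.1)]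
    ring

theorem IsWeakSolution.locallyIntegrable_Irate (hsol : IsWeakSolution b σ γ ϱ dbar α a₀ P₀ v A)
    (hstruct : StructuralAssumptions b σ γ ϱ dbar) (hC : Continuous (Cfun ϱ dbar v A)) :
    LocallyIntegrable (Irate σ γ ϱ dbar v A) := by
  obtain ⟨hA, -, -, -, -, hvA, -⟩ := hsol
  have hIic (T : ℝ) (hT : 0 < T) : IntegrableOn (Irate σ γ ϱ dbar v A) (Iic T) := by
    have hneg : IntegrableOn (Irate σ γ ϱ dbar v A) (Iic 0) :=
      integrableOn_zero.congr_fun (fun s (hs : s ≤ 0) => (if_pos hs).symm) measurableSet_Iic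
    have hpos : IntegrableOn (Irate σ γ ϱ dbar v A) (Ioc 0 T) := by
      refine (((hvA T hT).mul_continuousOn (hstruct.continuousOn_coeff hC hA hT)
        isCompact_Icc).mono_set Ioc_subset_Icc_self).congr_fun (fun s hs => ?_) measurableSet_Ioc
      simp only [Irate, if_neg (not_le.2 hs.1), mul_assoc]
    rw [← Iic_union_Ioc_eq_Iic hT.le]
    exact hneg.union hpos
  exact fun x => ⟨Iic (|x| + 1), Iic_mem_nhds (by linarith [le_abs_self x]),
    hIic _ (by positivity)⟩

theorem IsWeakSolution.continuousOn_Irate (hsol : IsWeakSolution b σ γ ϱ dbar α a₀ P₀ v A)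
    (hstruct : StructuralAssumptions b σ γ ϱ dbar) (hC : Continuous (Cfun ϱ dbar v A)) :
    ContinuousOn (Irate σ γ ϱ dbar v A) (Ioi 0) := by
  obtain ⟨hA, -, -, hv, -⟩ := hsol
  have hvA : ContinuousOn (fun s => v s (A s)) (Ioi 0) :=
    hv.comp (continuousOn_id.prodMk hA.continuousOn) fun s hs => ⟨hs, le_rfl⟩
  intro t (ht : 0 < t)
  have hcoeff := (hstruct.continuousOn_coeff hC hA (T := t + 1) (by linarith)).continuousAt
    (Icc_mem_nhds ht (by linarith))
  refine (((hvA.continuousAt (Ioi_mem_nhds ht)).mul hcoeff).congr ?_).continuousWithinAt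
  filter_upwards [Ioi_mem_nhds ht] with s (hs : 0 < s)
  simp only [Irate, if_neg hs.not_ge, Pi.mul_apply, mul_assoc]

theorem IsWeakSolution.hasDerivAt_Ifun [IsProbabilityMeasure P₀]
    (hsol : IsWeakSolution b σ γ ϱ dbar α a₀ P₀ v A)
    (hstruct : StructuralAssumptions b σ γ ϱ dbar) (hC : Continuous (Cfun ϱ dbar v A))
    {t : ℝ} (ht : 0 < t) : HasDerivAt (Ifun v A) (Irate σ γ ϱ dbar v A t) t := by
  have hcont := hsol.continuousOn_Irate hstruct hC
  rw [funext hsol.Ifun_eq_integral_Irate]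
  exact intervalIntegral.integral_hasDerivAt_right
    (((hsol.locallyIntegrable_Irate hstruct hC).integrableOn_isCompact
      isCompact_uIcc).intervalIntegrable)
    (hcont.stronglyMeasurableAtFilter isOpen_Ioi t ht) (hcont.continuousAt (Ioi_mem_nhds ht))

end WeakSolution

theorem weak_solution_boundary_regularity_general
    (b σ γ : ℝ → ℝ → ℝ) (ϱ : ℝ → ℝ) (dbar α a₀ : ℝ)
    (hdbar : 0 < dbar) (P₀ : Measure ℝ)
    (hstruct : StructuralAssumptions b σ γ ϱ dbar)
    (hinit : InitialCondition a₀ P₀)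
    (v : ℝ → ℝ → ℝ) (A : ℝ → ℝ)
    (hsol : IsWeakSolution b σ γ ϱ dbar α a₀ P₀ v A) :
    ∃ I' C' A' : ℝ → ℝ,
      (∀ s ≤ (0 : ℝ), I' s = 0) ∧
      ContinuousOn I' (Ioi 0) ∧ ContinuousOn C' (Ioi 0) ∧ ContinuousOn A' (Ioi 0) ∧
      (∀ t > (0 : ℝ),
        HasDerivAt (Ifun v A) (I' t) t ∧
        HasDerivAt (Cfun ϱ dbar v A) (C' t) t ∧
        HasDerivAt A (A' t) t ∧
        I' t = v t (A t) * γ t (Cfun ϱ dbar v A t) * (σ t (A t)) ^ 2 ∧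
        A' t = α * ∫ s in (t - dbar)..t, ϱ (t - s) * I' s) := by
  have := hinit.1
  have hϱ : BoundedVariationOn ϱ (Icc 0 dbar) := hstruct.2.2.2.2.2.2.2.1
  have hϱint := hϱ.intervalIntegrable hdbar.le
  set Ψ : ℝ → ℝ := fun t => ∫ r in (0 : ℝ)..dbar, ϱ r * Ifun v A (t - r)
  set g : ℝ → ℝ := fun t => ∫ r in (0 : ℝ)..dbar, ϱ r * Irate σ γ ϱ dbar v A (t - r)
  have hCΨ : Cfun ϱ dbar v A = fun t => Ψ t - Ψ (t - dbar) :=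
    funext (hsol.Cfun_eq_sub hstruct hϱint)
  have hΨc : Continuous Ψ :=
    hϱ.continuous_integral_mul_comp_sub hdbar.le (hsol.locallyIntegrable_Ifun hstruct)
  have hC : Continuous (Cfun ϱ dbar v A) := hCΨ ▸ hΨc.sub (hΨc.comp (continuous_sub_right dbar))
  have hI' := hsol.locallyIntegrable_Irate hstruct hC
  have hg : Continuous g := hϱ.continuous_integral_mul_comp_sub hdbar.le hI'
  have hΨ (t : ℝ) : HasDerivAt Ψ (g t) t := by
    simpa only [Ψ, hsol.Ifun_eq_integral_Irate] using
      hasDerivAt_integral_mul_primitive_comp_sub hϱint hI' hg t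
  have hA (t : ℝ) (ht : 0 < t) : A t = a₀ + α * Ψ t := by
    rw [hsol.2.2.2.2.2.2.2.1 t ht, integral_comp_sub_left_mul]
  refine ⟨Irate σ γ ϱ dbar v A, fun t => g t - g (t - dbar), fun t => α * g t,
    fun s hs => if_pos hs, hsol.continuousOn_Irate hstruct hC,
    (hg.sub (hg.comp (continuous_sub_right dbar))).continuousOn,
    (continuous_const.mul hg).continuousOn, fun t ht => ⟨hsol.hasDerivAt_Ifun hstruct hC ht,
      hCΨ ▸ (hΨ t).sub ((hΨ (t - dbar)).comp_sub_const t dbar),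
      (((hΨ t).const_mul α).const_add a₀).congr_of_eventuallyEq
        (eventually_of_mem (Ioi_mem_nhds ht) hA),
      if_neg ht.not_ge, by rw [integral_comp_sub_left_mul]⟩⟩

/-- Regularity consequence of the weak formulation: if `(v, A)` is a weak solution
of the free boundary problem, then `t ↦ I_t`, `t ↦ C_t` and `t ↦ A_t` are
continuously differentiable on `(0,∞)`, with
`I'_t = v(t, A_t) γ(t, C_t) σ(t, A_t)²` and
`A'_t = α ∫_{t-d̄}^t ϱ(t-s) I'_s ds` for all `t > 0`
(where `I'_s = 0` for `s ≤ 0`). -/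
theorem weak_solution_boundary_regularity
    (b σ γ : ℝ → ℝ → ℝ) (ϱ : ℝ → ℝ) (dbar α a₀ : ℝ)
    (hdbar : 0 < dbar) (hα : 0 < α) (P₀ : Measure ℝ)
    (hstruct : StructuralAssumptions b σ γ ϱ dbar)
    (hinit : InitialCondition a₀ P₀)
    (v : ℝ → ℝ → ℝ) (A : ℝ → ℝ)
    (hsol : IsWeakSolution b σ γ ϱ dbar α a₀ P₀ v A) :
    ∃ I' C' A' : ℝ → ℝ,
      (∀ s ≤ (0 : ℝ), I' s = 0) ∧
      ContinuousOn I' (Ioi 0) ∧ ContinuousOn C' (Ioi 0) ∧ ContinuousOn A' (Ioi 0) ∧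
      (∀ t > (0 : ℝ),
        HasDerivAt (Ifun v A) (I' t) t ∧
        HasDerivAt (Cfun ϱ dbar v A) (C' t) t ∧
        HasDerivAt A (A' t) t ∧
        I' t = v t (A t) * γ t (Cfun ϱ dbar v A t) * (σ t (A t)) ^ 2 ∧
        A' t = α * ∫ s in (t - dbar)..t, ϱ (t - s) * I' s) :=
  weak_solution_boundary_regularity_general b σ γ ϱ dbar α a₀ hdbar P₀ hstruct hinit v A hsol
end

section
/- Stieltjes self-integral identity (used in Lemma 5.6): Let g, h : [0,∞) → ℝ be continuous nondecreasing functions with g(0) = h(0), and let μ_g, μ_h denote their Lebesgue–Stieltjes measures. Then for every t ≥ 0, ∫_{(0,t]} (h(s) − g(s)) dμ_g(s) − ∫_{(0,t]} (h(s) − g(s)) dμ_h(s) = −(g(t) − h(t))²/2. -/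
/-!
Write `Δf = f t - f 0`. For Stieltjes functions `F, G` with `F` continuous, Tonelli on the
triangle `{u ≤ s} ⊆ (0, t]²` gives the integration-by-parts formula
`∫ (G - G 0) dμ_F + ∫ (F - F 0) dμ_G = ΔF · ΔG`; continuity of `F` makes the diagonal
`μ_F ⊗ μ_G`-null. Applied to `(g, h)`, `(g, g)` and `(h, h)` it turns the left-hand side into
`Δg Δh - (Δg)² / 2 - (Δh)² / 2 = -(Δg - Δh)² / 2`, and `Δg - Δh = g t - h t` as `g 0 = h 0`.
-/

open MeasureTheory Set

namespace StieltjesFunction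

variable (F G : StieltjesFunction ℝ) {a b : ℝ}

theorem measureReal_Ioc (hab : a ≤ b) : F.measure.real (Ioc a b) = F b - F a := by
  rw [measureReal_def, F.measure_Ioc, ENNReal.toReal_ofReal (sub_nonneg.2 (F.mono hab))]

theorem measureReal_Icc_of_continuousWithinAt (hF : ContinuousWithinAt F (Iic a) a)
    (hab : a ≤ b) : F.measure.real (Icc a b) = F b - F a := by
  rw [measureReal_def, F.measure_Icc, hF.leftLim_eq,
    ENNReal.toReal_ofReal (sub_nonneg.2 (F.mono hab))]

instance isFiniteMeasure_restrict_Ioc : IsFiniteMeasure (F.measure.restrict (Ioc a b)) :=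
  isFiniteMeasure_restrict.2 (by simp [F.measure_Ioc])

theorem setIntegral_sub_add_setIntegral_sub (hF : Continuous F) (hab : a ≤ b) :
    ∫ s in Ioc a b, (G s - G a) ∂F.measure + ∫ s in Ioc a b, (F s - F a) ∂G.measure
      = (F b - F a) * (G b - G a) := by
  set I := Ioc a b
  have hG_inner : ∀ s ∈ I, G s - G a = ∫ u in I, (if u ≤ s then 1 else 0 : ℝ) ∂G.measure := by
    intro s hs
    have : (fun u => if u ≤ s then (1 : ℝ) else 0) = (Iic s).indicator 1 := by
      ext u; simp [indicator_apply]
    rw [this, integral_indicator_one measurableSet_Iic, measureReal_restrict_apply measurableSet_Iic,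
      Iic_inter_Ioc_of_le hs.2, G.measureReal_Ioc hs.1.le]
  have hF_inner : ∀ u ∈ I, ∫ s in I, (if u ≤ s then 1 else 0 : ℝ) ∂F.measure = F b - F u := by
    intro u hu
    have : (fun s => if u ≤ s then (1 : ℝ) else 0) = (Ici u).indicator 1 := by
      ext s; simp [indicator_apply]
    have hIcc : Ici u ∩ I = Icc u b := by
      ext s; simp only [I, mem_inter_iff, mem_Ici, mem_Ioc, mem_Icc]
      exact ⟨fun h => ⟨h.1, h.2.2⟩, fun h => ⟨h.1, hu.1.trans_le h.1, h.2⟩⟩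
    rw [this, integral_indicator_one measurableSet_Ici, measureReal_restrict_apply measurableSet_Ici,
      hIcc, F.measureReal_Icc_of_continuousWithinAt hF.continuousWithinAt hu.2]
  have hint : Integrable (Function.uncurry fun s u => (if u ≤ s then 1 else 0 : ℝ))
      ((F.measure.restrict I).prod (G.measure.restrict I)) := by
    have : (Function.uncurry fun s u => if u ≤ s then (1 : ℝ) else 0)
        = {p : ℝ × ℝ | p.2 ≤ p.1}.indicator 1 := by
      ext ⟨s, u⟩; simp [indicator_apply]
    rw [this]
    exact (integrable_const 1).indicator (measurableSet_le measurable_snd measurable_fst)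
  calc ∫ s in I, (G s - G a) ∂F.measure + ∫ s in I, (F s - F a) ∂G.measure
      = ∫ u in I, (F b - F u) ∂G.measure + ∫ u in I, (F u - F a) ∂G.measure := by
        rw [setIntegral_congr_fun measurableSet_Ioc hG_inner, integral_integral_swap hint,
          setIntegral_congr_fun measurableSet_Ioc hF_inner]
    _ = ∫ u in I, (F b - F a) ∂G.measure := by
        have hFb : IntegrableOn (fun u => F b - F u) I G.measure :=
          (continuous_const.sub hF).integrableOn_Ioc
        have hFa : IntegrableOn (fun u => F u - F a) I G.measure :=
          (hF.sub continuous_const).integrableOn_Ioc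
        simp_rw [← integral_add hFb hFa, sub_add_sub_cancel]
    _ = (F b - F a) * (G b - G a) := by
        rw [setIntegral_const, G.measureReal_Ioc hab, smul_eq_mul, mul_comm]

end StieltjesFunction

/-- Stieltjes self-integral identity (used in Lemma 5.6): if `g, h` are continuous
nondecreasing functions (realised as Stieltjes functions) with `g 0 = h 0`, then
for every `t ≥ 0`,
`∫_{(0,t]} (h - g) dμ_g - ∫_{(0,t]} (h - g) dμ_h = -(g t - h t)² / 2`. -/
theorem stieltjes_self_integral_identity
    (g h : StieltjesFunction ℝ)
    (hg : Continuous fun x => g x) (hh : Continuous fun x => h x)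
    (h0 : g 0 = h 0) :
    ∀ t ≥ (0 : ℝ),
      (∫ s in Ioc (0 : ℝ) t, (h s - g s) ∂g.measure)
        - (∫ s in Ioc (0 : ℝ) t, (h s - g s) ∂h.measure)
      = -(g t - h t) ^ 2 / 2 := by
  intro t ht
  have hsplit : ∀ μ : Measure ℝ, [IsLocallyFiniteMeasure μ] →
      ∫ s in Ioc 0 t, (h s - g s) ∂μ
        = ∫ s in Ioc 0 t, (h s - h 0) ∂μ - ∫ s in Ioc 0 t, (g s - g 0) ∂μ := by
    intro μ _
    have hh' : IntegrableOn (fun s => h s - h 0) (Ioc 0 t) μ :=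
      (hh.sub continuous_const).integrableOn_Ioc
    have hg' : IntegrableOn (fun s => g s - g 0) (Ioc 0 t) μ :=
      (hg.sub continuous_const).integrableOn_Ioc
    simp_rw [← integral_sub hh' hg', h0, sub_sub_sub_cancel_right]
  have hgh := g.setIntegral_sub_add_setIntegral_sub h hg ht
  have hgg := g.setIntegral_sub_add_setIntegral_sub g hg ht
  have hhh := h.setIntegral_sub_add_setIntegral_sub h hh ht
  rw [hsplit, hsplit]
  linear_combination hgh - hgg / 2 - hhh / 2 + (g t - h t - (g 0 - h 0) / 2) * h0
end

section
/- Gaussian convolution estimate (step in the proof of Theorem 3.2): Let a, b > 0, q ≥ 1 and T > 0. Then there exist constants κ, λ > 0, depending only on a, b, q and T, such that for all 0 < s < t ≤ T and all x ≥ 0, ∫₀^∞ exp(−a(x−z)²/(t−s)) · (1+z)^q · exp(−b z²) dz ≤ κ (t−s)^{1/2} exp(−λ x²). -/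
open MeasureTheory Set Filter Topology

/-- Gaussian convolution estimate (step in the proof of Theorem 3.2): for
`a, b > 0`, `q ≥ 1` and `T > 0`, there exist `κ, λ > 0`, depending only on
`a, b, q, T`, such that for all `0 < s < t ≤ T` and `x ≥ 0`,
`∫₀^∞ exp(-a(x-z)²/(t-s)) (1+z)^q exp(-bz²) dz ≤ κ (t-s)^{1/2} exp(-λx²)`. -/
theorem gaussian_convolution_estimate
    (a b q T : ℝ) (ha : 0 < a) (hb : 0 < b) (hq : 1 ≤ q) (hT : 0 < T) :
    ∃ κ > (0 : ℝ), ∃ lam > (0 : ℝ),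
      ∀ s t : ℝ, 0 < s → s < t → t ≤ T → ∀ x ≥ (0 : ℝ),
        (∫ z in Ioi (0 : ℝ),
          Real.exp (-a * (x - z) ^ 2 / (t - s)) * (1 + z) ^ q * Real.exp (-b * z ^ 2))
        ≤ κ * Real.sqrt (t - s) * Real.exp (-lam * x ^ 2) := by
  have hc0 : 0 < min (a/(2*T)) (3*b/4) := lt_min (by positivity) (by positivity)
  set c : ℝ := min (a/(2*T)) (3*b/4) with hcdef
  refine ⟨Real.exp (q^2/b) * Real.sqrt (2*Real.pi/a), by positivity, c/2, by positivity,
    fun s t hs hst htT x hx => ?_⟩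
  have hts : 0 < t - s := by linarith
  have htsT : t - s ≤ T := by linarith
  set τ := t - s with hτ
  set β : ℝ := (a/2) / τ with hβ
  have hβ0 : 0 < β := by positivity
  have hgint : Integrable (fun z : ℝ => Real.exp (-β * (z - x)^2)) :=
    (integrable_exp_neg_mul_sq hβ0).comp_sub_right x
  set C : ℝ := Real.exp (q^2/b) * Real.exp (-(c/2) * x^2) with hC
  have hC0 : 0 ≤ C := by positivity
  have hstep1 :
      (∫ z in Ioi (0 : ℝ),
        Real.exp (-a * (x - z) ^ 2 / τ) * (1 + z) ^ q * Real.exp (-b * z ^ 2))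
      ≤ ∫ z in Ioi (0:ℝ), C * Real.exp (-β * (z - x)^2) := by
    refine integral_mono_of_nonneg ?_ ((hgint.const_mul C).integrableOn) ?_
    · filter_upwards [self_mem_ae_restrict measurableSet_Ioi] with z hz
      simp only [mem_Ioi] at hz
      have h1z : (0:ℝ) < 1 + z := by linarith
      positivity
    · filter_upwards [self_mem_ae_restrict measurableSet_Ioi] with z hz
      simp only [mem_Ioi] at hz
      have h1z : (0:ℝ) < 1 + z := by linarith
      rw [Real.rpow_def_of_pos h1z, hC, ← Real.exp_add, ← Real.exp_add, ← Real.exp_add,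
        ← Real.exp_add]
      apply Real.exp_le_exp.2
      have hlog : Real.log (1+z) ≤ z := by
        have := Real.log_le_sub_one_of_pos h1z
        linarith
      have hLq : Real.log (1+z) * q ≤ z * q :=
        mul_le_mul_of_nonneg_right hlog (by linarith)
      have hqz : z * q ≤ q^2/b + b/4*z^2 := by
        rw [← sub_nonneg]
        have h : q^2/b + b/4*z^2 - z*q = (2*q - b*z)^2/(4*b) := by
          field_simp; ring
        rw [h]; positivity
      have e1 : -a * (x - z)^2 / τ = -a * ((x-z)^2/τ) := by ring
      have e2 : -β * (z - x)^2 = -(a/2) * ((x-z)^2/τ) := by rw [hβ]; ring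
      rw [e1, e2]
      have hdd : (x-z)^2/T ≤ (x-z)^2/τ :=
        div_le_div_of_nonneg_left (sq_nonneg _) hts htsT
      have hD : (a/(2*T)) * (x-z)^2 ≤ (a/2) * ((x-z)^2/τ) := by
        calc (a/(2*T)) * (x-z)^2 = (a/2) * ((x-z)^2/T) := by ring
          _ ≤ (a/2) * ((x-z)^2/τ) :=
            mul_le_mul_of_nonneg_left hdd (by positivity)
      have t1 : c * (x-z)^2 ≤ (a/(2*T)) * (x-z)^2 :=
        mul_le_mul_of_nonneg_right (min_le_left _ _) (sq_nonneg _)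
      have t2 : c * z^2 ≤ (3*b/4) * z^2 :=
        mul_le_mul_of_nonneg_right (min_le_right _ _) (sq_nonneg _)
      have hx2 : x^2 ≤ 2*(x-z)^2 + 2*z^2 := by nlinarith [sq_nonneg (x - 2*z)]
      have t3 : c * x^2 ≤ c * (2*(x-z)^2 + 2*z^2) :=
        mul_le_mul_of_nonneg_left hx2 hc0.le
      linarith [hLq, hqz, hD, t1, t2, t3]
  have h1 : (∫ z in Ioi (0:ℝ), Real.exp (-β * (z - x)^2))
      ≤ ∫ z, Real.exp (-β * (z - x)^2) :=
    setIntegral_le_integral hgint (ae_of_all _ fun z => (Real.exp_pos _).le)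
  have h2 : (∫ z : ℝ, Real.exp (-β * (z - x)^2)) = Real.sqrt (Real.pi / β) := by
    have := integral_sub_right_eq_self (μ := volume) (fun z : ℝ => Real.exp (-β * z^2)) x
    rw [this]
    exact integral_gaussian β
  have hstep2 : (∫ z in Ioi (0:ℝ), C * Real.exp (-β * (z - x)^2))
      ≤ C * Real.sqrt (Real.pi / β) := by
    rw [integral_const_mul]
    exact mul_le_mul_of_nonneg_left (h1.trans_eq h2) hC0
  have hsq : Real.sqrt (Real.pi / β) = Real.sqrt (2*Real.pi/a) * Real.sqrt τ := by
    rw [show Real.pi / β = (2*Real.pi/a) * τ by rw [hβ]; field_simp]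
    exact Real.sqrt_mul (by positivity) _
  calc (∫ z in Ioi (0 : ℝ),
          Real.exp (-a * (x - z) ^ 2 / τ) * (1 + z) ^ q * Real.exp (-b * z ^ 2))
      ≤ ∫ z in Ioi (0:ℝ), C * Real.exp (-β * (z - x)^2) := hstep1
    _ ≤ C * Real.sqrt (Real.pi / β) := hstep2
    _ = Real.exp (q^2/b) * Real.sqrt (2*Real.pi/a) * Real.sqrt τ
          * Real.exp (-(c/2) * x^2) := by rw [hsq, hC]; ring
end
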